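/- Let E₁⁺, E₁⁻, E₂⁺, E₂⁻ be finite-dimensional complex inner product spaces and let a : E₁⁺ → E₁⁻ and b : E₂⁺ → E₂⁻ be linear maps. Define the linear map M : (E₁⁺⊗E₂⁺) ⊕ (E₁⁻⊗E₂⁻) → (E₁⁻⊗E₂⁺) ⊕ (E₁⁺⊗E₂⁻) by the block matrix M = [[a⊗1, −1⊗b*],[1⊗b, a*⊗1]]. Then M*M = (a*a)⊗1 + 1⊗(b*b) on E₁⁺⊗E₂⁺ plus the analogous positive operator on E₁⁻⊗E₂⁻, and M is invertible if and only if a is invertible or b is invertible. -/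

import Mathlib

/-!
An operator `S*S + T*T` has kernel `ker S ∩ ker T`, and `ker (a ⊗ 1) ∩ ker (1 ⊗ b)` is trivial iff
`a` or `b` is injective (otherwise it contains `v ⊗ w ≠ 0` with `a v = 0`, `b w = 0`). Applied to
the two diagonal blocks of `M*M`, this shows that `M` is injective iff (`a` or `b` is injective)
and (`a*` or `b*` is, i.e. `a` or `b` is surjective). The domain and codomain of `M` have equal
dimension iff `(dim E₁⁺ - dim E₁⁻)(dim E₂⁺ - dim E₂⁻) = 0`, and together these two conditions say
exactly that `a` or `b` is invertible.
-/

open scoped TensorProduct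
open LinearMap Function

theorem Nat.mul_add_mul_eq_mul_add_mul_iff (p₁ m₁ p₂ m₂ : ℕ) :
    p₁ * p₂ + m₁ * m₂ = m₁ * p₂ + p₁ * m₂ ↔ p₁ = m₁ ∨ p₂ = m₂ := by
  have key : p₁ * p₂ + m₁ * m₂ = m₁ * p₂ + p₁ * m₂ ↔
      ((p₁ : ℤ) - m₁) * ((p₂ : ℤ) - m₂) = 0 := by
    zify
    constructor <;> intro h <;> linear_combination h
  rw [key, _root_.mul_eq_zero, sub_eq_zero, sub_eq_zero, Nat.cast_inj, Nat.cast_inj]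

namespace LinearMap

section FiniteDimensional

variable {K V W : Type*} [DivisionRing K] [AddCommGroup V] [Module K V] [AddCommGroup W]
  [Module K W] [FiniteDimensional K V] [FiniteDimensional K W]

theorem bijective_iff_injective_and_finrank_eq (f : V →ₗ[K] W) :
    Bijective f ↔ Injective f ∧ Module.finrank K V = Module.finrank K W :=
  ⟨fun h ↦ ⟨h.injective, (LinearEquiv.ofBijective f h).finrank_eq⟩,
    fun ⟨hf, hVW⟩ ↦ ⟨hf, (injective_iff_surjective_of_finrank_eq_finrank hVW).mp hf⟩⟩

theorem bijective_iff_surjective_and_finrank_eq (f : V →ₗ[K] W) :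
    Bijective f ↔ Surjective f ∧ Module.finrank K V = Module.finrank K W :=
  ⟨fun h ↦ ⟨h.surjective, (LinearEquiv.ofBijective f h).finrank_eq⟩,
    fun ⟨hf, hVW⟩ ↦ ⟨(injective_iff_surjective_of_finrank_eq_finrank hVW).mpr hf, hf⟩⟩

end FiniteDimensional

variable {𝕜 E F G : Type*} [RCLike 𝕜]
  [NormedAddCommGroup E] [InnerProductSpace 𝕜 E] [FiniteDimensional 𝕜 E]
  [NormedAddCommGroup F] [InnerProductSpace 𝕜 F] [FiniteDimensional 𝕜 F]
  [NormedAddCommGroup G] [InnerProductSpace 𝕜 G] [FiniteDimensional 𝕜 G]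

theorem injective_adjoint_iff_surjective (A : E →ₗ[𝕜] F) :
    Injective (adjoint A) ↔ Surjective A := by
  rw [← ker_eq_bot, ← orthogonal_range, Submodule.orthogonal_eq_bot_iff, range_eq_top]

theorem ker_adjoint_comp_self_add_adjoint_comp_self (A : E →ₗ[𝕜] F) (B : E →ₗ[𝕜] G) :
    ker (adjoint A ∘ₗ A + adjoint B ∘ₗ B) = ker A ⊓ ker B := by
  ext z
  simp only [mem_ker, Submodule.mem_inf]
  refine ⟨fun h ↦ ?_, fun ⟨hA, hB⟩ ↦ by simp [hA, hB]⟩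
  have hnorm : ‖A z‖ ^ 2 + ‖B z‖ ^ 2 = 0 := by
    have := congrArg (fun u ↦ RCLike.re (inner 𝕜 z u)) h
    simpa [inner_add_right, adjoint_inner_right, ← inner_self_eq_norm_sq] using this
  rw [add_eq_zero_iff_of_nonneg (by positivity) (by positivity)] at hnorm
  simpa using hnorm

end LinearMap

namespace TensorProduct

variable {𝕜 V V' W W' : Type*} [RCLike 𝕜]
  [NormedAddCommGroup V] [InnerProductSpace 𝕜 V]
  [NormedAddCommGroup V'] [InnerProductSpace 𝕜 V']
  [NormedAddCommGroup W] [InnerProductSpace 𝕜 W]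
  [NormedAddCommGroup W'] [InnerProductSpace 𝕜 W']

theorem ker_map_id_inf_ker_id_map_eq_bot_iff (c : V →ₗ[𝕜] V') (d : W →ₗ[𝕜] W') :
    ker (map c (LinearMap.id : W →ₗ[𝕜] W)) ⊓
        ker (map (LinearMap.id : V →ₗ[𝕜] V) d) = ⊥ ↔
      Injective c ∨ Injective d := by
  constructor
  · contrapose!
    rintro ⟨hc, hd⟩
    rw [← ker_eq_bot, ← ne_eq, Submodule.ne_bot_iff] at hc hd
    obtain ⟨v, hv, hv0⟩ := hc
    obtain ⟨w, hw, hw0⟩ := hd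
    refine (Submodule.ne_bot_iff _).mpr ⟨v ⊗ₜ w, ?_, ?_⟩
    · simp_all
    · rw [← norm_ne_zero_iff, norm_tmul]
      exact mul_ne_zero (norm_ne_zero_iff.mpr hv0) (norm_ne_zero_iff.mpr hw0)
  · rintro (hc | hd)
    · have : Injective (map c (LinearMap.id : W →ₗ[𝕜] W)) :=
        Module.Flat.rTensor_preserves_injective_linearMap c hc
      rw [ker_eq_bot.mpr this, bot_inf_eq]
    · have : Injective (map (LinearMap.id : V →ₗ[𝕜] V) d) :=
        Module.Flat.lTensor_preserves_injective_linearMap d hd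
      rw [ker_eq_bot.mpr this, inf_bot_eq]

variable [FiniteDimensional 𝕜 V] [FiniteDimensional 𝕜 V'] [FiniteDimensional 𝕜 W]
  [FiniteDimensional 𝕜 W']

theorem injective_map_adjoint_comp_self_add_iff (c : V →ₗ[𝕜] V') (d : W →ₗ[𝕜] W') :
    Injective (map (adjoint c ∘ₗ c) (LinearMap.id : W →ₗ[𝕜] W) +
        map (LinearMap.id : V →ₗ[𝕜] V) (adjoint d ∘ₗ d)) ↔
      Injective c ∨ Injective d := by
  have hc : map (adjoint c ∘ₗ c) (LinearMap.id : W →ₗ[𝕜] W) =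
      adjoint (map c LinearMap.id) ∘ₗ map c LinearMap.id := by
    rw [adjoint_map, adjoint_id, ← map_comp, LinearMap.id_comp]
  have hd : map (LinearMap.id : V →ₗ[𝕜] V) (adjoint d ∘ₗ d) =
      adjoint (map LinearMap.id d) ∘ₗ map LinearMap.id d := by
    rw [adjoint_map, adjoint_id, ← map_comp, LinearMap.id_comp]
  rw [hc, hd, ← ker_eq_bot, ker_adjoint_comp_self_add_adjoint_comp_self,
    ker_map_id_inf_ker_id_map_eq_bot_iff]

end TensorProduct

section ExternalProduct

open TensorProduct

variable {𝕜 E1p E1m E2p E2m : Type*} [RCLike 𝕜]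
  [NormedAddCommGroup E1p] [InnerProductSpace 𝕜 E1p] [FiniteDimensional 𝕜 E1p]
  [NormedAddCommGroup E1m] [InnerProductSpace 𝕜 E1m] [FiniteDimensional 𝕜 E1m]
  [NormedAddCommGroup E2p] [InnerProductSpace 𝕜 E2p] [FiniteDimensional 𝕜 E2p]
  [NormedAddCommGroup E2m] [InnerProductSpace 𝕜 E2m] [FiniteDimensional 𝕜 E2m]
  (a : E1p →ₗ[𝕜] E1m) (b : E2p →ₗ[𝕜] E2m)

noncomputable def externalProduct :
    (E1p ⊗[𝕜] E2p) × (E1m ⊗[𝕜] E2m) →ₗ[𝕜] (E1m ⊗[𝕜] E2p) × (E1p ⊗[𝕜] E2m) :=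
  prod (map a LinearMap.id ∘ₗ fst 𝕜 _ _ - map LinearMap.id (adjoint b) ∘ₗ snd 𝕜 _ _)
    (map LinearMap.id b ∘ₗ fst 𝕜 _ _ + map (adjoint a) LinearMap.id ∘ₗ snd 𝕜 _ _)

-- The adjoint of `externalProduct a b` for the `ℓ²` inner product on the two products, which
-- the plain product types do not carry.
noncomputable def externalProductAdjoint :
    (E1m ⊗[𝕜] E2p) × (E1p ⊗[𝕜] E2m) →ₗ[𝕜] (E1p ⊗[𝕜] E2p) × (E1m ⊗[𝕜] E2m) :=
  prod
    (map (adjoint a) LinearMap.id ∘ₗ fst 𝕜 _ _ + map LinearMap.id (adjoint b) ∘ₗ snd 𝕜 _ _)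
    (-(map (LinearMap.id : E1m →ₗ[𝕜] E1m) b ∘ₗ fst 𝕜 (E1m ⊗[𝕜] E2p) (E1p ⊗[𝕜] E2m)) +
      map a (LinearMap.id : E2m →ₗ[𝕜] E2m) ∘ₗ snd 𝕜 (E1m ⊗[𝕜] E2p) (E1p ⊗[𝕜] E2m))

theorem externalProductAdjoint_comp_externalProduct :
    externalProductAdjoint a b ∘ₗ externalProduct a b =
      prodMap (map (adjoint a ∘ₗ a) LinearMap.id + map LinearMap.id (adjoint b ∘ₗ b))
        (map (a ∘ₗ adjoint a) LinearMap.id + map LinearMap.id (b ∘ₗ adjoint b)) := by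
  ext <;> simp [externalProduct, externalProductAdjoint, add_comm]

@[simp] theorem externalProduct_apply (z : (E1p ⊗[𝕜] E2p) × (E1m ⊗[𝕜] E2m)) :
    externalProduct a b z =
      (map a LinearMap.id z.1 - map LinearMap.id (adjoint b) z.2,
        map LinearMap.id b z.1 + map (adjoint a) LinearMap.id z.2) :=
  rfl

theorem injective_externalProduct_iff :
    Injective (externalProduct a b) ↔
      (Injective a ∨ Injective b) ∧ (Surjective a ∨ Surjective b) := by
  rw [← injective_adjoint_iff_surjective a, ← injective_adjoint_iff_surjective b]
  constructor
  · intro hM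
    refine ⟨(ker_map_id_inf_ker_id_map_eq_bot_iff a b).mp ?_,
      (ker_map_id_inf_ker_id_map_eq_bot_iff (adjoint a) (adjoint b)).mp ?_⟩ <;>
    rw [Submodule.eq_bot_iff] <;> rintro z ⟨hz₁, hz₂⟩
    · simpa using @hM (z, 0) 0 (by simp_all)
    · simpa using @hM (0, z) 0 (by simp_all)
  · rintro ⟨h₁, h₂⟩
    have hD₂ := (injective_map_adjoint_comp_self_add_iff (adjoint a) (adjoint b)).mpr h₂
    rw [adjoint_adjoint, adjoint_adjoint] at hD₂
    refine Injective.of_comp (f := externalProductAdjoint a b) ?_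
    rw [← coe_comp, externalProductAdjoint_comp_externalProduct, coe_prodMap]
    exact ((injective_map_adjoint_comp_self_add_iff a b).mpr h₁).prodMap hD₂

theorem finrank_externalProduct_eq_iff :
    Module.finrank 𝕜 ((E1p ⊗[𝕜] E2p) × (E1m ⊗[𝕜] E2m)) =
        Module.finrank 𝕜 ((E1m ⊗[𝕜] E2p) × (E1p ⊗[𝕜] E2m)) ↔
      Module.finrank 𝕜 E1p = Module.finrank 𝕜 E1m ∨
        Module.finrank 𝕜 E2p = Module.finrank 𝕜 E2m := by
  simp only [Module.finrank_prod, Module.finrank_tensorProduct]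
  exact Nat.mul_add_mul_eq_mul_add_mul_iff _ _ _ _

theorem bijective_externalProduct_iff :
    Bijective (externalProduct a b) ↔ Bijective a ∨ Bijective b := by
  rw [bijective_iff_injective_and_finrank_eq, injective_externalProduct_iff,
    finrank_externalProduct_eq_iff]
  have ha := bijective_iff_injective_and_finrank_eq a
  have ha' := bijective_iff_surjective_and_finrank_eq a
  have hb := bijective_iff_injective_and_finrank_eq b
  have hb' := bijective_iff_surjective_and_finrank_eq b
  tauto

end ExternalProduct

/-- The external product of two symbols at a point.  Given `a : E₁⁺ → E₁⁻` and
`b : E₂⁺ → E₂⁻`, the block matrix `M = [[a⊗1, -1⊗b*],[1⊗b, a*⊗1]]`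
(where `*` is the Hermitian adjoint) satisfies `M*M = (a*a⊗1 + 1⊗b*b) ⊕ (aa*⊗1 + 1⊗bb*)`
— a direct sum of nonnegative operators — and `M` is invertible iff `a` or `b` is. -/
theorem external_product_support
    (E1p E1m E2p E2m : Type*)
    [NormedAddCommGroup E1p] [InnerProductSpace ℂ E1p] [FiniteDimensional ℂ E1p]
    [NormedAddCommGroup E1m] [InnerProductSpace ℂ E1m] [FiniteDimensional ℂ E1m]
    [NormedAddCommGroup E2p] [InnerProductSpace ℂ E2p] [FiniteDimensional ℂ E2p]
    [NormedAddCommGroup E2m] [InnerProductSpace ℂ E2m] [FiniteDimensional ℂ E2m]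
    (a : E1p →ₗ[ℂ] E1m) (b : E2p →ₗ[ℂ] E2m)
    -- the block matrix `M = [[a⊗1, -1⊗b*],[1⊗b, a*⊗1]]` :
    (M : (E1p ⊗[ℂ] E2p) × (E1m ⊗[ℂ] E2m) →ₗ[ℂ] (E1m ⊗[ℂ] E2p) × (E1p ⊗[ℂ] E2m))
    (hM : M = LinearMap.prod
        ((TensorProduct.map a LinearMap.id) ∘ₗ LinearMap.fst ℂ _ _
          - (TensorProduct.map LinearMap.id (LinearMap.adjoint b)) ∘ₗ LinearMap.snd ℂ _ _)
        ((TensorProduct.map LinearMap.id b) ∘ₗ LinearMap.fst ℂ _ _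
          + (TensorProduct.map (LinearMap.adjoint a) LinearMap.id) ∘ₗ LinearMap.snd ℂ _ _))
    -- its Hermitian adjoint `M* = [[a*⊗1, 1⊗b*],[-1⊗b, a⊗1]]` :
    (Mstar : (E1m ⊗[ℂ] E2p) × (E1p ⊗[ℂ] E2m) →ₗ[ℂ] (E1p ⊗[ℂ] E2p) × (E1m ⊗[ℂ] E2m))
    (hMstar : Mstar = LinearMap.prod
        ((TensorProduct.map (LinearMap.adjoint a) LinearMap.id) ∘ₗ LinearMap.fst ℂ _ _
          + (TensorProduct.map LinearMap.id (LinearMap.adjoint b)) ∘ₗ LinearMap.snd ℂ _ _)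
        (-((TensorProduct.map (LinearMap.id : E1m →ₗ[ℂ] E1m) b)
            ∘ₗ LinearMap.fst ℂ (E1m ⊗[ℂ] E2p) (E1p ⊗[ℂ] E2m))
          + (TensorProduct.map a (LinearMap.id : E2m →ₗ[ℂ] E2m))
            ∘ₗ LinearMap.snd ℂ (E1m ⊗[ℂ] E2p) (E1p ⊗[ℂ] E2m))) :
    Mstar ∘ₗ M = LinearMap.prodMap
        (TensorProduct.map (LinearMap.adjoint a ∘ₗ a) LinearMap.id
          + TensorProduct.map LinearMap.id (LinearMap.adjoint b ∘ₗ b))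
        (TensorProduct.map (a ∘ₗ LinearMap.adjoint a) LinearMap.id
          + TensorProduct.map LinearMap.id (b ∘ₗ LinearMap.adjoint b))
    ∧ (Function.Bijective M ↔ (Function.Bijective a ∨ Function.Bijective b)) := by
  subst hM hMstar
  exact ⟨externalProductAdjoint_comp_externalProduct a b, bijective_externalProduct_iff a b⟩
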